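/- Let Cᵢ and Cⱼ be two disjoint maximal commuting Pauli classes in dimension d = 2ⁿ. Then: (a) every operator U ∈ Cᵢ commutes with exactly 2^{n−1} − 1 of the operators in Cⱼ; and (b) this set of 2^{n−1} − 1 operators determines U up to phase, i.e. if U, V ∈ Cᵢ commute with exactly the same subset of Cⱼ, then U and V are equal up to phase. -/

import Mathlib

open Matrix

noncomputable section

/-- Matrices on the Hilbert space of `n` qubits, with rows and columns indexed by
bit strings `Fin n → Fin 2`. -/
abbrev QMat (n : ℕ) := Matrix (Fin n → Fin 2) (Fin n → Fin 2) ℂ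

/-- The single-qubit identity. -/
def pI : Matrix (Fin 2) (Fin 2) ℂ := 1

/-- The single-qubit Pauli X. -/
def pX : Matrix (Fin 2) (Fin 2) ℂ := !![0, 1; 1, 0]

/-- The single-qubit Pauli Y. -/
def pY : Matrix (Fin 2) (Fin 2) ℂ := !![0, -Complex.I; Complex.I, 0]

/-- The single-qubit Pauli Z. -/
def pZ : Matrix (Fin 2) (Fin 2) ℂ := !![1, 0; 0, -1]

/-- The `n`-fold Kronecker product `W 0 ⊗ ⋯ ⊗ W (n-1)`, realized on indices
`Fin n → Fin 2`. -/
def kron (n : ℕ) (W : Fin n → Matrix (Fin 2) (Fin 2) ℂ) : QMat n :=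
  fun v w => ∏ j, W j (v j) (w j)

/-- `M` is an `n`-qubit Pauli operator: an `n`-fold Kronecker product of matrices
from `{I₂, X, Y, Z}`. -/
def IsPauliOp (n : ℕ) (M : QMat n) : Prop :=
  ∃ W : Fin n → Matrix (Fin 2) (Fin 2) ℂ,
    (∀ j, W j = pI ∨ W j = pX ∨ W j = pY ∨ W j = pZ) ∧ M = kron n W

/-- Two matrices are equal up to phase if one is a nonzero scalar multiple of the other. -/
def PhaseEq {m : Type*} (A B : Matrix m m ℂ) : Prop := ∃ c : ℂ, c ≠ 0 ∧ A = c • B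

/-- A maximal commuting Pauli class in dimension `d = 2 ^ n`: a set of `d - 1`
pairwise commuting non-identity `n`-qubit Pauli operators, pairwise distinct up to phase. -/
def IsMaxClass (n : ℕ) (C : Set (QMat n)) : Prop :=
  C.Finite ∧ C.ncard = 2 ^ n - 1 ∧
  (∀ U ∈ C, IsPauliOp n U ∧ U ≠ 1) ∧
  (∀ U ∈ C, ∀ V ∈ C, U * V = V * U) ∧
  (∀ U ∈ C, ∀ V ∈ C, U ≠ V → ¬ PhaseEq U V)

/-- Two classes are disjoint if no member of one is equal up to phase to a member of the other. -/
def ClassDisjoint {n : ℕ} (C D : Set (QMat n)) : Prop :=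
  ∀ U ∈ C, ∀ V ∈ D, ¬ PhaseEq U V

/-- Two classes are equal up to phase (as sets of operators). -/
def ClassPhaseEq {n : ℕ} (C D : Set (QMat n)) : Prop :=
  (∀ U ∈ C, ∃ V ∈ D, PhaseEq U V) ∧ (∀ V ∈ D, ∃ U ∈ C, PhaseEq U V)

/-- The standard Hermitian inner product on `ι → ℂ` (conjugate-linear in the first slot). -/
def cinner {ι : Type*} [Fintype ι] (x y : ι → ℂ) : ℂ :=
  ∑ k, (starRingEnd ℂ) (x k) * y k

/-!
Label Pauli operators by `(x, z) ∈ 𝔽₂²ⁿ`, the operator being `Xˣ Zᶻ` up to phase. Two Pauli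
operators commute iff the symplectic form `ω` vanishes on their labels, and distinct labels give
operators that are not equal up to phase. The `2ⁿ - 1` labels of a maximal class are therefore
pairwise `ω`-orthogonal; their span is isotropic, so it has at most `2ⁿ` elements, and it already
contains them and `0`: it is a Lagrangian subspace `L` with `L^ω = L`.

For disjoint classes `Lᵢ ∩ Lⱼ = 0`. A label `u` of `U ∈ Cᵢ` is thus not in `Lⱼ = Lⱼ^ω`, so
`ω(u, ·)` is a nonzero functional on `Lⱼ`, whose kernel has `2ⁿ⁻¹` elements: this gives (a).
If `u` and `v` are `ω`-orthogonal to the same labels of `Cⱼ`, then `u - v ∈ Lⱼ^ω = Lⱼ` and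
`u - v ∈ Lᵢ`, so `u = v`: this gives (b).
-/

open Module

def pauli (a : ZMod 2 × ZMod 2) : Matrix (Fin 2) (Fin 2) ℂ := ![![pI, pZ], ![pX, pY]] a.1 a.2

abbrev signChar : AddChar (ZMod 2) ℂ := AddChar.zmodChar 2 (ζ := -1) (by norm_num)

lemma pauli_mul_self (a : ZMod 2 × ZMod 2) : pauli a * pauli a = 1 := by
  obtain ⟨x, z⟩ := a
  fin_cases x <;> fin_cases z <;> simp [pauli, pI, pX, pY, pZ, Matrix.one_fin_two]

lemma trace_pauli_mul (a b : ZMod 2 × ZMod 2) :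
    (pauli a * pauli b).trace = if a = b then 2 else 0 := by
  obtain ⟨x, z⟩ := a
  obtain ⟨x', z'⟩ := b
  fin_cases x <;> fin_cases z <;> fin_cases x' <;> fin_cases z' <;>
    simp +decide [pauli, pI, pX, pY, pZ, Matrix.one_fin_two, Matrix.trace_fin_two,
      one_add_one_eq_two]

lemma pauli_mul_comm (a b : ZMod 2 × ZMod 2) :
    pauli a * pauli b = signChar (a.1 * b.2 - a.2 * b.1) • (pauli b * pauli a) := by
  obtain ⟨x, z⟩ := a
  obtain ⟨x', z'⟩ := b
  fin_cases x <;> fin_cases z <;> fin_cases x' <;> fin_cases z' <;>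
    simp +decide [pauli, pI, pX, pY, pZ, Matrix.one_fin_two, AddChar.zmodChar_apply]

lemma kron_mul (n : ℕ) (W W' : Fin n → Matrix (Fin 2) (Fin 2) ℂ) :
    kron n W * kron n W' = kron n (fun j => W j * W' j) := by
  ext v w
  simp only [kron, Matrix.mul_apply, Fintype.prod_sum, Finset.prod_mul_distrib]

lemma kron_smul (n : ℕ) (c : Fin n → ℂ) (W : Fin n → Matrix (Fin 2) (Fin 2) ℂ) :
    kron n (fun j => c j • W j) = (∏ j, c j) • kron n W := by
  ext v w
  simp [kron, Finset.prod_mul_distrib]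

lemma kron_one (n : ℕ) : kron n (fun _ => 1) = 1 := by
  ext v w
  simp [kron, Matrix.one_apply, Finset.prod_boole, funext_iff]

lemma trace_kron (n : ℕ) (W : Fin n → Matrix (Fin 2) (Fin 2) ℂ) :
    (kron n W).trace = ∏ j, (W j).trace := by
  simp only [Matrix.trace, Matrix.diag, kron, Fintype.prod_sum]

def symplecticForm (R : Type*) [CommRing R] (n : ℕ) : LinearMap.BilinForm R (Fin n → R × R) :=
  LinearMap.mk₂ R (fun t t' => ∑ j, ((t j).1 * (t' j).2 - (t j).2 * (t' j).1))
    (fun _ _ _ => by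
      simp only [Pi.add_apply, Prod.fst_add, Prod.snd_add, ← Finset.sum_add_distrib]
      exact Finset.sum_congr rfl fun _ _ => by ring)
    (fun _ _ _ => by
      simp only [Pi.smul_apply, Prod.smul_fst, Prod.smul_snd, smul_eq_mul, Finset.mul_sum]
      exact Finset.sum_congr rfl fun _ _ => by ring)
    (fun _ _ _ => by
      simp only [Pi.add_apply, Prod.fst_add, Prod.snd_add, ← Finset.sum_add_distrib]
      exact Finset.sum_congr rfl fun _ _ => by ring)
    (fun _ _ _ => by
      simp only [Pi.smul_apply, Prod.smul_fst, Prod.smul_snd, smul_eq_mul, Finset.mul_sum]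
      exact Finset.sum_congr rfl fun _ _ => by ring)

lemma symplecticForm_apply {R : Type*} [CommRing R] {n : ℕ} (t t' : Fin n → R × R) :
    symplecticForm R n t t' = ∑ j, ((t j).1 * (t' j).2 - (t j).2 * (t' j).1) := rfl

lemma symplecticForm_isRefl (R : Type*) [CommRing R] (n : ℕ) : (symplecticForm R n).IsRefl := by
  intro t t' h
  rw [symplecticForm_apply] at h ⊢
  rw [← neg_eq_zero, ← h, ← Finset.sum_neg_distrib]
  exact Finset.sum_congr rfl fun _ _ => by ring

lemma symplecticForm_nondegenerate (R : Type*) [CommRing R] (n : ℕ) :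
    (symplecticForm R n).Nondegenerate := by
  refine (symplecticForm_isRefl R n).nondegenerate_iff_separatingLeft.mpr fun t ht => ?_
  funext j
  have hx := ht (Pi.single j (0, 1))
  have hz := ht (Pi.single j (1, 0))
  simp only [symplecticForm_apply] at hx hz
  rw [Finset.sum_eq_single j (fun k _ hk => by simp [Pi.single_eq_of_ne hk]) (by simp)] at hx hz
  ext
  · simpa using hx
  · simpa using hz

lemma finrank_fin_fun_prod (R : Type*) [CommRing R] [StrongRankCondition R] (n : ℕ) :
    finrank R (Fin n → R × R) = 2 * n := by
  simp [finrank_pi_fintype, finrank_prod, mul_comm]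

def pauliOp (n : ℕ) (t : Fin n → ZMod 2 × ZMod 2) : QMat n := kron n fun j => pauli (t j)

lemma pauliOp_mul_self (n : ℕ) (t : Fin n → ZMod 2 × ZMod 2) : pauliOp n t * pauliOp n t = 1 := by
  simp only [pauliOp, kron_mul, pauli_mul_self, kron_one]

lemma pauliOp_zero (n : ℕ) : pauliOp n 0 = 1 :=
  kron_one n

lemma pauliOp_mul_comm (n : ℕ) (t t' : Fin n → ZMod 2 × ZMod 2) :
    pauliOp n t * pauliOp n t' =
      signChar (symplecticForm (ZMod 2) n t t') • (pauliOp n t' * pauliOp n t) := by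
  simp only [pauliOp, kron_mul, pauli_mul_comm (t _), kron_smul, symplecticForm_apply]
  congr 1
  exact (map_prod signChar.toMonoidHom _ _).symm

lemma signChar_eq_one_iff {x : ZMod 2} : signChar x = 1 ↔ x = 0 := by
  obtain rfl | rfl : x = 0 ∨ x = 1 := by decide +revert
  · simp
  · norm_num [AddChar.zmodChar_apply, ZMod.val_one]

lemma isUnit_pauliOp (n : ℕ) (t : Fin n → ZMod 2 × ZMod 2) : IsUnit (pauliOp n t) :=
  ⟨⟨_, _, pauliOp_mul_self n t, pauliOp_mul_self n t⟩, rfl⟩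

lemma commute_pauliOp_iff {n : ℕ} {t t' : Fin n → ZMod 2 × ZMod 2} :
    pauliOp n t * pauliOp n t' = pauliOp n t' * pauliOp n t ↔
      symplecticForm (ZMod 2) n t t' = 0 := by
  have hne : pauliOp n t' * pauliOp n t ≠ 0 :=
    ((isUnit_pauliOp n t').mul (isUnit_pauliOp n t)).ne_zero
  rw [pauliOp_mul_comm, ← signChar_eq_one_iff]
  exact (smul_left_injective ℂ hne).eq_iff' (one_smul _ _)

lemma eq_of_phaseEq_pauliOp {n : ℕ} {t t' : Fin n → ZMod 2 × ZMod 2}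
    (h : PhaseEq (pauliOp n t) (pauliOp n t')) : t = t' := by
  obtain ⟨c, hc, h⟩ := h
  have htrace : (pauliOp n t * pauliOp n t').trace ≠ 0 := by
    rw [h, smul_mul_assoc, pauliOp_mul_self, Matrix.trace_smul, Matrix.trace_one]
    simp [hc]
  by_contra hne
  obtain ⟨j, hj⟩ := Function.ne_iff.mp hne
  refine htrace ?_
  rw [pauliOp, pauliOp, kron_mul, trace_kron]
  exact Finset.prod_eq_zero (Finset.mem_univ j) (by rw [trace_pauli_mul, if_neg hj])

lemma pauliOp_injective (n : ℕ) : Function.Injective (pauliOp n) := fun _ _ h =>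
  eq_of_phaseEq_pauliOp ⟨1, one_ne_zero, by rw [h, one_smul]⟩

lemma exists_pauli_eq {W : Matrix (Fin 2) (Fin 2) ℂ} (h : W = pI ∨ W = pX ∨ W = pY ∨ W = pZ) :
    ∃ a, pauli a = W := by
  rcases h with rfl | rfl | rfl | rfl
  exacts [⟨(0, 0), rfl⟩, ⟨(1, 0), rfl⟩, ⟨(1, 1), rfl⟩, ⟨(0, 1), rfl⟩]

lemma IsPauliOp.exists_pauliOp_eq {n : ℕ} {M : QMat n} (h : IsPauliOp n M) :
    ∃ t, pauliOp n t = M := by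
  obtain ⟨W, hW, rfl⟩ := h
  choose t ht using fun j => exists_pauli_eq (hW j)
  exact ⟨t, congrArg (kron n) (funext ht)⟩

lemma phaseEq_refl {m : Type*} (A : Matrix m m ℂ) : PhaseEq A A :=
  ⟨1, one_ne_zero, (one_smul ℂ A).symm⟩

namespace LinearMap.BilinForm

section CommRing

variable {R M : Type*} [CommRing R] [AddCommGroup M] [Module R M] {B : LinearMap.BilinForm R M}

lemma mem_orthogonal_span_iff {S : Set M} {x : M} :
    x ∈ B.orthogonal (Submodule.span R S) ↔ ∀ s ∈ S, B s x = 0 := by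
  rw [mem_orthogonal_iff]
  refine ⟨fun h s hs => h s (Submodule.subset_span hs), fun h y hy => ?_⟩
  exact (Submodule.span_le.mpr h : Submodule.span R S ≤ LinearMap.ker (B.flip x)) hy

lemma span_le_orthogonal_span {S : Set M} (hS : ∀ x ∈ S, ∀ y ∈ S, B x y = 0) :
    Submodule.span R S ≤ B.orthogonal (Submodule.span R S) :=
  Submodule.span_le.mpr fun y hy => mem_orthogonal_span_iff.mpr fun s hs => hS s hs y hy

end CommRing

variable {K V : Type*} [Field K] [AddCommGroup V] [Module K V] [FiniteDimensional K V]
  {B : LinearMap.BilinForm K V} {W : Submodule K V}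

lemma two_mul_finrank_le (hB : B.Nondegenerate) (hW : W ≤ B.orthogonal W) :
    2 * finrank K W ≤ finrank K V := by
  have := Submodule.finrank_mono hW
  rw [finrank_orthogonal hB] at this
  have := Submodule.finrank_le W
  omega

lemma orthogonal_eq_self (hB : B.Nondegenerate) (hW : W ≤ B.orthogonal W)
    (hdim : finrank K V ≤ 2 * finrank K W) : B.orthogonal W = W :=
  (Submodule.eq_of_le_of_finrank_le hW (by rw [finrank_orthogonal hB]; omega)).symm

lemma finrank_inf_ker_add_one (hB : B.IsRefl) (hW : B.orthogonal W = W) {x : V} (hx : x ∉ W) :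
    finrank K (W ⊓ LinearMap.ker (B x) : Submodule K V) + 1 = finrank K W := by
  have hf : (B x).domRestrict W ≠ 0 := by
    intro hf
    refine hx (hW ▸ (mem_orthogonal_iff.mpr fun y hy => hB x y ?_))
    exact DFunLike.congr_fun hf ⟨y, hy⟩
  rw [← Module.Dual.finrank_ker_add_one_of_ne_zero hf, LinearMap.ker_domRestrict,
    ← Submodule.map_comap_subtype, Submodule.finrank_map_subtype_eq]

section Finite

variable [Finite K] {S : Set V} {m : ℕ}

lemma ncard_span_of_isotropic (hB : B.Nondegenerate) (hS : ∀ x ∈ S, ∀ y ∈ S, B x y = 0)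
    (h0 : 0 ∉ S) (hV : finrank K V = 2 * m) (hcard : S.ncard + 1 = Nat.card K ^ m) :
    (Submodule.span K S : Set V).ncard = Nat.card K ^ m := by
  have : Finite V := Module.finite_of_finite K
  have hrank : finrank K (Submodule.span K S) ≤ m := by
    have := two_mul_finrank_le hB (span_le_orthogonal_span hS)
    omega
  refine le_antisymm ?_ ?_
  · rw [← Nat.card_coe_set_eq, SetLike.coe_sort_coe, Module.natCard_eq_pow_finrank (K := K)]
    exact Nat.pow_le_pow_right Nat.card_pos hrank
  · rw [← hcard, ← Set.ncard_insert_of_notMem h0 S.toFinite]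
    exact Set.ncard_le_ncard (Set.insert_subset (Submodule.zero_mem _) Submodule.subset_span)
      (Set.toFinite _)

lemma coe_span_of_isotropic (hB : B.Nondegenerate) (hS : ∀ x ∈ S, ∀ y ∈ S, B x y = 0)
    (h0 : 0 ∉ S) (hV : finrank K V = 2 * m) (hcard : S.ncard + 1 = Nat.card K ^ m) :
    (Submodule.span K S : Set V) = insert 0 S := by
  have : Finite V := Module.finite_of_finite K
  refine (Set.eq_of_subset_of_ncard_le ?_ ?_ (Set.toFinite _)).symm
  · exact Set.insert_subset (Submodule.zero_mem _) Submodule.subset_span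
  · rw [ncard_span_of_isotropic hB hS h0 hV hcard, Set.ncard_insert_of_notMem h0 S.toFinite, hcard]

lemma finrank_span_of_isotropic (hB : B.Nondegenerate) (hS : ∀ x ∈ S, ∀ y ∈ S, B x y = 0)
    (h0 : 0 ∉ S) (hV : finrank K V = 2 * m) (hcard : S.ncard + 1 = Nat.card K ^ m) :
    finrank K (Submodule.span K S) = m := by
  refine Nat.pow_right_injective (Finite.one_lt_card (α := K)) ?_
  dsimp only
  rw [← Module.natCard_eq_pow_finrank (K := K), ← SetLike.coe_sort_coe, Nat.card_coe_set_eq]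
  exact ncard_span_of_isotropic hB hS h0 hV hcard

end Finite

end LinearMap.BilinForm

def pauliSpan (n : ℕ) (C : Set (QMat n)) : Submodule (ZMod 2) (Fin n → ZMod 2 × ZMod 2) :=
  Submodule.span (ZMod 2) (pauliOp n ⁻¹' C)

namespace IsMaxClass

variable {n : ℕ} {C : Set (QMat n)}

lemma image_preimage_pauliOp (hC : IsMaxClass n C) : pauliOp n '' (pauliOp n ⁻¹' C) = C :=
  Set.image_preimage_eq_of_subset fun U hU => (hC.2.2.1 U hU).1.exists_pauliOp_eq

lemma zero_notMem_preimage (hC : IsMaxClass n C) :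
    (0 : Fin n → ZMod 2 × ZMod 2) ∉ pauliOp n ⁻¹' C :=
  fun h => (hC.2.2.1 _ h).2 (pauliOp_zero n)

lemma ncard_preimage_add_one (hC : IsMaxClass n C) :
    (pauliOp n ⁻¹' C).ncard + 1 = Nat.card (ZMod 2) ^ n := by
  rw [Set.ncard_preimage_of_injective_subset_range (pauliOp_injective n)
    (fun U hU => (hC.2.2.1 U hU).1.exists_pauliOp_eq), hC.2.1, Nat.card_zmod]
  have := Nat.one_le_two_pow (n := n)
  omega

lemma isotropic (hC : IsMaxClass n C) :
    ∀ t ∈ pauliOp n ⁻¹' C, ∀ t' ∈ pauliOp n ⁻¹' C, symplecticForm (ZMod 2) n t t' = 0 :=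
  fun _ ht _ ht' => commute_pauliOp_iff.mp (hC.2.2.2.1 _ ht _ ht')

lemma coe_pauliSpan (hC : IsMaxClass n C) :
    (pauliSpan n C : Set (Fin n → ZMod 2 × ZMod 2)) = insert 0 (pauliOp n ⁻¹' C) :=
  LinearMap.BilinForm.coe_span_of_isotropic (symplecticForm_nondegenerate _ n) hC.isotropic
    hC.zero_notMem_preimage (finrank_fin_fun_prod _ n) hC.ncard_preimage_add_one

lemma finrank_pauliSpan (hC : IsMaxClass n C) : finrank (ZMod 2) (pauliSpan n C) = n :=
  LinearMap.BilinForm.finrank_span_of_isotropic (symplecticForm_nondegenerate _ n) hC.isotropic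
    hC.zero_notMem_preimage (finrank_fin_fun_prod _ n) hC.ncard_preimage_add_one

lemma orthogonal_pauliSpan (hC : IsMaxClass n C) :
    (symplecticForm (ZMod 2) n).orthogonal (pauliSpan n C) = pauliSpan n C := by
  refine LinearMap.BilinForm.orthogonal_eq_self (symplecticForm_nondegenerate _ n)
    (LinearMap.BilinForm.span_le_orthogonal_span hC.isotropic) ?_
  rw [hC.finrank_pauliSpan, finrank_fin_fun_prod]

lemma commutant_eq_image (hC : IsMaxClass n C) (t : Fin n → ZMod 2 × ZMod 2) :
    {V ∈ C | pauliOp n t * V = V * pauliOp n t} =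
      pauliOp n '' {s ∈ pauliOp n ⁻¹' C | symplecticForm (ZMod 2) n t s = 0} := by
  ext V
  constructor
  · rintro ⟨hV, hcomm⟩
    obtain ⟨s, rfl⟩ := (hC.2.2.1 V hV).1.exists_pauliOp_eq
    exact ⟨s, ⟨hV, commute_pauliOp_iff.mp hcomm⟩, rfl⟩
  · rintro ⟨s, ⟨hs, hts⟩, rfl⟩
    exact ⟨hs, commute_pauliOp_iff.mpr hts⟩

lemma ncard_preimage_commutant (hC : IsMaxClass n C) {t : Fin n → ZMod 2 × ZMod 2}
    (ht : t ∉ pauliSpan n C) :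
    {s ∈ pauliOp n ⁻¹' C | symplecticForm (ZMod 2) n t s = 0}.ncard = 2 ^ (n - 1) - 1 := by
  have hset : {s ∈ pauliOp n ⁻¹' C | symplecticForm (ZMod 2) n t s = 0} =
      ((pauliSpan n C ⊓ LinearMap.ker (symplecticForm (ZMod 2) n t) :
        Submodule (ZMod 2) (Fin n → ZMod 2 × ZMod 2)) : Set _) \ {0} := by
    ext s
    have hs0 : s ∈ pauliOp n ⁻¹' C → s ≠ 0 := fun hs h0 => hC.zero_notMem_preimage (h0 ▸ hs)
    rw [Submodule.coe_inf, hC.coe_pauliSpan]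
    simp only [Set.mem_sdiff, Set.mem_inter_iff, Set.mem_insert_iff, SetLike.mem_coe,
      LinearMap.mem_ker, Set.mem_singleton_iff, Set.mem_ofPred_eq]
    tauto
  have hrank := LinearMap.BilinForm.finrank_inf_ker_add_one (symplecticForm_isRefl _ n)
    hC.orthogonal_pauliSpan ht
  rw [hC.finrank_pauliSpan] at hrank
  rw [hset, Set.ncard_sdiff_singleton_of_mem (Submodule.zero_mem _), ← Nat.card_coe_set_eq,
    SetLike.coe_sort_coe, Module.natCard_eq_pow_finrank (K := ZMod 2), Nat.card_zmod,
    show finrank _ _ = n - 1 by omega]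

lemma sub_mem_pauliSpan_of_commutant_eq (hC : IsMaxClass n C) {t t' : Fin n → ZMod 2 × ZMod 2}
    (h : {s ∈ pauliOp n ⁻¹' C | symplecticForm (ZMod 2) n t s = 0} =
      {s ∈ pauliOp n ⁻¹' C | symplecticForm (ZMod 2) n t' s = 0}) :
    t - t' ∈ pauliSpan n C := by
  rw [← hC.orthogonal_pauliSpan, pauliSpan, LinearMap.BilinForm.mem_orthogonal_span_iff]
  intro s hs
  have hiff : symplecticForm (ZMod 2) n t s = 0 ↔ symplecticForm (ZMod 2) n t' s = 0 :=
    and_congr_right_iff.mp (Set.ext_iff.mp h s) hs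
  have hzmod2 : ∀ a b : ZMod 2, (a = 0 ↔ b = 0) → a = b := by decide
  have heq := hzmod2 _ _ hiff
  refine symplecticForm_isRefl _ n _ _ ?_
  rw [map_sub, LinearMap.sub_apply, heq, sub_self]

end IsMaxClass

lemma ClassDisjoint.disjoint_pauliSpan {n : ℕ} {Ci Cj : Set (QMat n)} (hd : ClassDisjoint Ci Cj)
    (hi : IsMaxClass n Ci) (hj : IsMaxClass n Cj) :
    Disjoint (pauliSpan n Ci) (pauliSpan n Cj) := by
  rw [Submodule.disjoint_def]
  intro t hti htj
  by_contra h0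
  rw [← SetLike.mem_coe, hi.coe_pauliSpan] at hti
  rw [← SetLike.mem_coe, hj.coe_pauliSpan] at htj
  exact hd _ (hti.resolve_left h0) _ (htj.resolve_left h0) (phaseEq_refl _)

/-- For two disjoint maximal commuting Pauli classes `Ci`, `Cj` in `d = 2 ^ n`,
(a) every `U ∈ Ci` commutes with exactly `2 ^ (n - 1) - 1` operators of `Cj`, and
(b) this commuting subset of `Cj` determines `U` up to phase. -/
theorem commutant_in_other_class (n : ℕ) (Ci Cj : Set (QMat n))
    (hi : IsMaxClass n Ci) (hj : IsMaxClass n Cj) (hd : ClassDisjoint Ci Cj) :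
    (∀ U ∈ Ci, ({V ∈ Cj | U * V = V * U}).ncard = 2 ^ (n - 1) - 1) ∧
    (∀ U ∈ Ci, ∀ V ∈ Ci,
      {W ∈ Cj | U * W = W * U} = {W ∈ Cj | V * W = W * V} → PhaseEq U V) := by
  have hdisj := Submodule.disjoint_def.mp (hd.disjoint_pauliSpan hi hj)
  rw [← hi.image_preimage_pauliOp]
  simp only [Set.forall_mem_image]
  refine ⟨fun t ht => ?_, fun t ht t' ht' hcomm => ?_⟩
  · have htj : t ∉ pauliSpan n Cj := fun htj =>
      hi.zero_notMem_preimage (hdisj t (Submodule.subset_span ht) htj ▸ ht)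
    rw [hj.commutant_eq_image, Set.ncard_image_of_injective _ (pauliOp_injective n),
      hj.ncard_preimage_commutant htj]
  · rw [hj.commutant_eq_image, hj.commutant_eq_image,
      (Set.image_injective.mpr (pauliOp_injective n)).eq_iff] at hcomm
    have hsub := hdisj _ (Submodule.sub_mem _ (Submodule.subset_span ht)
      (Submodule.subset_span ht')) (hj.sub_mem_pauliSpan_of_commutant_eq hcomm)
    rw [sub_eq_zero.mp hsub]
    exact phaseEq_refl _
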